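/- arXiv:1507.06681 — 5 statements merged into one kernel-verified Lean document; each statement's English description precedes it below -/
import Mathlib

section
/- Let a, b be real numbers with 1 < a < b. Then ∫₀^{1/b} dx/√((x²−a²)(x²−1/a²)(x²−b²)(x²−1/b²)) = (1/2)·( (b/(1+b²))·K( b(1+a²)/(a(1+b²)) ) + (b/(b²−1))·K( b(a²−1)/(a(b²−1)) ) ). (The polynomial (x²−a²)(x²−1/a²)(x²−b²)(x²−1/b²) is nonnegative for x ∈ [0,1/b], so the integrand is real.) -/
open MeasureTheory Real

/-- Complete elliptic integral of the first kind. -/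
noncomputable def ellipticK (k : ℝ) : ℝ :=
  ∫ t in (0:ℝ)..1, 1 / Real.sqrt ((1 - t ^ 2) * (1 - k ^ 2 * t ^ 2))

/-- Complete elliptic integral of the second kind. -/
noncomputable def ellipticE (k : ℝ) : ℝ :=
  ∫ t in (0:ℝ)..1, Real.sqrt (1 - k ^ 2 * t ^ 2) / Real.sqrt (1 - t ^ 2)

/-- Lauricella hypergeometric function `F_D^(3)` (real arguments), via its
Euler integral representation. -/
noncomputable def FD3 (a b₁ b₂ b₃ c x₁ x₂ x₃ : ℝ) : ℝ :=
  Real.Gamma c / (Real.Gamma a * Real.Gamma (c - a)) *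
    ∫ u in (0:ℝ)..1,
      u ^ (a - 1) * (1 - u) ^ (c - a - 1) *
        (1 - x₁ * u) ^ (-b₁) * (1 - x₂ * u) ^ (-b₂) * (1 - x₃ * u) ^ (-b₃)

/-- Appell hypergeometric function `F₁` (real arguments), via its
Euler integral representation. -/
noncomputable def appellF1 (a b₁ b₂ c x y : ℝ) : ℝ :=
  Real.Gamma c / (Real.Gamma a * Real.Gamma (c - a)) *
    ∫ u in (0:ℝ)..1,
      u ^ (a - 1) * (1 - u) ^ (c - a - 1) * (1 - x * u) ^ (-b₁) * (1 - y * u) ^ (-b₂)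

/-- Lauricella hypergeometric function `F_D^(3)` (complex arguments), via its
Euler integral representation with principal branches. -/
noncomputable def FD3C (a b₁ b₂ b₃ c x₁ x₂ x₃ : ℂ) : ℂ :=
  Complex.Gamma c / (Complex.Gamma a * Complex.Gamma (c - a)) *
    ∫ u in (0:ℝ)..1,
      (u : ℂ) ^ (a - 1) * ((1 : ℂ) - (u : ℂ)) ^ (c - a - 1) *
        (1 - x₁ * (u : ℂ)) ^ (-b₁) * (1 - x₂ * (u : ℂ)) ^ (-b₂) *
        (1 - x₃ * (u : ℂ)) ^ (-b₃)

/-- Lauricella hypergeometric function `F_D^(4)` (complex arguments), via its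
Euler integral representation with principal branches. -/
noncomputable def FD4C (a b₁ b₂ b₃ b₄ c x₁ x₂ x₃ x₄ : ℂ) : ℂ :=
  Complex.Gamma c / (Complex.Gamma a * Complex.Gamma (c - a)) *
    ∫ u in (0:ℝ)..1,
      (u : ℂ) ^ (a - 1) * ((1 : ℂ) - (u : ℂ)) ^ (c - a - 1) *
        (1 - x₁ * (u : ℂ)) ^ (-b₁) * (1 - x₂ * (u : ℂ)) ^ (-b₂) *
        (1 - x₃ * (u : ℂ)) ^ (-b₃) * (1 - x₄ * (u : ℂ)) ^ (-b₄)

/-!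
Split the numerator as `1 = ((1 - x²) + (1 + x²)) / 2`. For `s = ±1` one has
`(x² - a²)(x² - a⁻²) = (1 + s x²)² - (a + s/a)² x²`, so the substitution
`t = (b + s/b) x / (1 + s x²)`, an increasing bijection of `(0, 1/b)` onto `(0, 1)`, turns
`(1 - t²)(1 - k² t²)` with `k = (a + s/a) / (b + s/b)` into the quartic under the root
divided by `(1 + s x²)⁴`. As `dt = (b + s/b)(1 - s x²) / (1 + s x²)² dx`, the half with
numerator `1 - s x²` equals `K(k) / (b + s/b)`.
-/

open Set

noncomputable def kIntegrand (k t : ℝ) : ℝ := 1 / √((1 - t ^ 2) * (1 - k ^ 2 * t ^ 2))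

lemma ellipticK_eq_setIntegral_Ioo (k : ℝ) : ellipticK k = ∫ t in Ioo 0 1, kIntegrand k t := by
  rw [ellipticK, intervalIntegral.integral_of_le zero_le_one, integral_Ioc_eq_integral_Ioo]
  rfl

lemma integrableOn_one_sub_rpow_neg_half :
    IntegrableOn (fun t : ℝ => (1 - t) ^ (-(1 / 2) : ℝ)) (Ioo 0 1) := by
  have h := (intervalIntegral.intervalIntegrable_rpow' (a := 0) (b := 1)
    (by norm_num : (-1 : ℝ) < -(1 / 2))).comp_sub_left 1
  simp only [sub_zero, sub_self] at h
  exact (intervalIntegrable_iff_integrableOn_Ioo_of_le zero_le_one).1 h.symm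

lemma kIntegrand_le {k t : ℝ} (hk : k ^ 2 < 1) (ht : t ∈ Ioo 0 1) :
    kIntegrand k t ≤ (1 - k ^ 2) ^ (-(1 / 2) : ℝ) * (1 - t) ^ (-(1 / 2) : ℝ) := by
  obtain ⟨ht0, ht1⟩ := ht
  have hk' : 0 < 1 - k ^ 2 := by linarith
  have ht' : 0 < 1 - t := by linarith
  have hkt : 1 - k ^ 2 ≤ 1 - k ^ 2 * t ^ 2 := by
    nlinarith [mul_le_mul_of_nonneg_left (by nlinarith : t ^ 2 ≤ 1) (sq_nonneg k)]
  have hle : (1 - k ^ 2) * (1 - t) ≤ (1 - t ^ 2) * (1 - k ^ 2 * t ^ 2) := by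
    nlinarith [mul_le_mul_of_nonneg_left hkt (by nlinarith : (0 : ℝ) ≤ 1 - t ^ 2),
      mul_le_mul_of_nonneg_right (by nlinarith : 1 - t ≤ 1 - t ^ 2) hk'.le]
  calc kIntegrand k t ≤ 1 / √((1 - k ^ 2) * (1 - t)) :=
        one_div_le_one_div_of_le (by positivity) (Real.sqrt_le_sqrt hle)
    _ = (1 - k ^ 2) ^ (-(1 / 2) : ℝ) * (1 - t) ^ (-(1 / 2) : ℝ) := by
        rw [Real.sqrt_mul hk'.le, Real.rpow_neg hk'.le, Real.rpow_neg ht'.le,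
          ← Real.sqrt_eq_rpow, ← Real.sqrt_eq_rpow, one_div, mul_inv]

lemma integrableOn_kIntegrand {k : ℝ} (hk : k ^ 2 < 1) :
    IntegrableOn (kIntegrand k) (Ioo 0 1) := by
  have hmeas : Measurable (kIntegrand k) := by
    unfold kIntegrand
    fun_prop
  refine (integrableOn_one_sub_rpow_neg_half.const_mul ((1 - k ^ 2) ^ (-(1 / 2) : ℝ))).mono'
    hmeas.aestronglyMeasurable ?_
  filter_upwards [ae_restrict_mem measurableSet_Ioo] with t ht
  rw [Real.norm_eq_abs, abs_of_nonneg (by unfold kIntegrand; positivity)]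
  exact kIntegrand_le hk ht

section Substitution

variable {s a b x : ℝ}

lemma one_add_mul_sq_pos (hs : s ^ 2 = 1) (hx : x ^ 2 < 1) : 0 < 1 + s * x ^ 2 := by
  nlinarith [sq_nonneg (s + 1), sq_nonneg x]

lemma one_sub_mul_sq_pos (hs : s ^ 2 = 1) (hx : x ^ 2 < 1) : 0 < 1 - s * x ^ 2 := by
  nlinarith [sq_nonneg (s - 1), sq_nonneg x]

lemma add_div_pos_of_one_lt (hs : s ^ 2 = 1) (hb : 1 < b) : 0 < b + s / b := by
  have hb0 : 0 < b := by linarith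
  rw [show b + s / b = (b ^ 2 + s) / b by field_simp]
  exact div_pos (by nlinarith [sq_nonneg (s + 1)]) hb0

lemma sq_add_div_lt_sq_add_div (hs : s ^ 2 = 1) (ha : 1 < a) (hab : a < b) :
    (a + s / a) ^ 2 < (b + s / b) ^ 2 := by
  have ha0 : a ≠ 0 := by positivity
  have hb0 : b ≠ 0 := (by linarith : 0 < b).ne'
  have hdiff : b + s / b - (a + s / a) = (b - a) * (a * b - s) / (a * b) := by
    field_simp
    ring
  have : 0 < (b - a) * (a * b - s) / (a * b) := by
    have : s < a * b := by nlinarith [sq_nonneg (s - 1)]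
    apply div_pos (mul_pos _ _) _ <;> nlinarith
  exact pow_lt_pow_left₀ (by linarith) (add_div_pos_of_one_lt hs ha).le two_ne_zero

lemma one_sub_sq_subst (hs : s ^ 2 = 1) (ha : a ≠ 0) (hx : 1 + s * x ^ 2 ≠ 0) :
    1 - ((a + s / a) * x / (1 + s * x ^ 2)) ^ 2 =
      (x ^ 2 - a ^ 2) * (x ^ 2 - 1 / a ^ 2) / (1 + s * x ^ 2) ^ 2 := by
  field_simp
  linear_combination (a ^ 2 * x ^ 4 - x ^ 2) * hs

lemma kIntegrand_subst (hs : s ^ 2 = 1) (ha : a ≠ 0) (hb : b ≠ 0) (hB : b + s / b ≠ 0)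
    (hx : 1 + s * x ^ 2 ≠ 0) :
    kIntegrand ((a + s / a) / (b + s / b)) ((b + s / b) * x / (1 + s * x ^ 2)) =
      (1 + s * x ^ 2) ^ 2 /
        √((x ^ 2 - a ^ 2) * (x ^ 2 - 1 / a ^ 2) * (x ^ 2 - b ^ 2) * (x ^ 2 - 1 / b ^ 2)) := by
  have hk : (a + s / a) / (b + s / b) * ((b + s / b) * x / (1 + s * x ^ 2)) =
      (a + s / a) * x / (1 + s * x ^ 2) := by
    rw [mul_div_assoc (b + s / b), ← mul_assoc, div_mul_cancel₀ _ hB, ← mul_div_assoc]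
  rw [kIntegrand, ← mul_pow, hk, one_sub_sq_subst hs hb hx, one_sub_sq_subst hs ha hx,
    div_mul_div_comm, ← sq, Real.sqrt_div' _ (by positivity), Real.sqrt_sq (by positivity),
    one_div_div]
  congr 2
  ring

lemma hasDerivAt_subst (B s x : ℝ) (hx : 1 + s * x ^ 2 ≠ 0) :
    HasDerivAt (fun x => B * x / (1 + s * x ^ 2))
      (B * (1 - s * x ^ 2) / (1 + s * x ^ 2) ^ 2) x := by
  refine (((hasDerivAt_id' x).const_mul B).div
    (((hasDerivAt_pow 2 x).const_mul s).const_add 1) hx).congr_deriv ?_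
  ring

lemma sq_lt_one_of_mem_Icc (hb : 1 < b) (hx : x ∈ Icc 0 (1 / b)) : x ^ 2 < 1 := by
  have : 1 / b < 1 := (div_lt_one (by linarith)).2 hb
  nlinarith [hx.1, hx.2]

lemma strictMonoOn_subst (hs : s ^ 2 = 1) (hb : 1 < b) :
    StrictMonoOn (fun x => (b + s / b) * x / (1 + s * x ^ 2)) (Icc 0 (1 / b)) := by
  have hderiv (x) (hx : x ∈ Icc 0 (1 / b)) := hasDerivAt_subst (b + s / b) s x
    (one_add_mul_sq_pos hs (sq_lt_one_of_mem_Icc hb hx)).ne'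
  refine strictMonoOn_of_hasDerivWithinAt_pos (convex_Icc _ _)
    (f' := fun x => (b + s / b) * (1 - s * x ^ 2) / (1 + s * x ^ 2) ^ 2)
    (fun x hx => (hderiv x hx).continuousAt.continuousWithinAt) ?_ ?_
  · intro x hx
    exact (hderiv x (interior_subset hx)).hasDerivWithinAt
  · intro x hx
    have hx1 := sq_lt_one_of_mem_Icc hb (interior_subset hx)
    exact div_pos (mul_pos (add_div_pos_of_one_lt hs hb) (one_sub_mul_sq_pos hs hx1))
      (pow_pos (one_add_mul_sq_pos hs hx1) 2)

lemma image_subst_Ioo (hs : s ^ 2 = 1) (hb : 1 < b) :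
    (fun x => (b + s / b) * x / (1 + s * x ^ 2)) '' Ioo 0 (1 / b) = Ioo 0 1 := by
  have hb0 : 0 < b := by linarith
  have hcont : ContinuousOn (fun x => (b + s / b) * x / (1 + s * x ^ 2)) (Icc 0 (1 / b)) :=
    fun x hx => (hasDerivAt_subst (b + s / b) s x
      (one_add_mul_sq_pos hs (sq_lt_one_of_mem_Icc hb hx)).ne').continuousAt.continuousWithinAt
  rw [hcont.image_Ioo_of_strictMonoOn (by positivity) (strictMonoOn_subst hs hb)]
  have : b ^ 2 + s ≠ 0 := by nlinarith [sq_nonneg (s + 1)]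
  congr 1
  · simp
  · field_simp

theorem integrableOn_and_setIntegral_one_sub_mul_sq_div_sqrt (hs : s ^ 2 = 1)
    (ha : a ≠ 0) (hb : 1 < b) (hk : (a + s / a) ^ 2 < (b + s / b) ^ 2) :
    IntegrableOn (fun x => (1 - s * x ^ 2) /
        √((x ^ 2 - a ^ 2) * (x ^ 2 - 1 / a ^ 2) * (x ^ 2 - b ^ 2) * (x ^ 2 - 1 / b ^ 2)))
      (Ioo 0 (1 / b)) ∧
    ∫ x in Ioo 0 (1 / b), (1 - s * x ^ 2) /
        √((x ^ 2 - a ^ 2) * (x ^ 2 - 1 / a ^ 2) * (x ^ 2 - b ^ 2) * (x ^ 2 - 1 / b ^ 2)) =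
      ellipticK ((a + s / a) / (b + s / b)) / (b + s / b) := by
  set B := b + s / b
  set k := (a + s / a) / B
  have hB : 0 < B := add_div_pos_of_one_lt hs hb
  have hb0 : b ≠ 0 := (by linarith : 0 < b).ne'
  have hden (x) (hx : x ∈ Ioo 0 (1 / b)) : 0 < 1 + s * x ^ 2 :=
    one_add_mul_sq_pos hs (sq_lt_one_of_mem_Icc hb (Ioo_subset_Icc_self hx))
  have hderiv (x) (hx : x ∈ Ioo 0 (1 / b)) :=
    (hasDerivAt_subst B s x (hden x hx).ne').hasDerivWithinAt (s := Ioo 0 (1 / b))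
  have hinj := (strictMonoOn_subst hs hb).injOn.mono Ioo_subset_Icc_self
  have hintegrand : EqOn (fun x => |B * (1 - s * x ^ 2) / (1 + s * x ^ 2) ^ 2| •
        kIntegrand k (B * x / (1 + s * x ^ 2)))
      (fun x => B * ((1 - s * x ^ 2) /
        √((x ^ 2 - a ^ 2) * (x ^ 2 - 1 / a ^ 2) * (x ^ 2 - b ^ 2) * (x ^ 2 - 1 / b ^ 2))))
      (Ioo 0 (1 / b)) := by
    intro x hx
    have h1 := hden x hx
    have h2 := one_sub_mul_sq_pos hs (sq_lt_one_of_mem_Icc hb (Ioo_subset_Icc_self hx))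
    simp only [smul_eq_mul]
    rw [kIntegrand_subst hs ha hb0 hB.ne' h1.ne', abs_of_pos (by positivity)]
    field_simp
  have hk' : k ^ 2 < 1 := by rwa [div_pow, div_lt_one (by positivity)]
  have hK := ellipticK_eq_setIntegral_Ioo k
  rw [← image_subst_Ioo hs hb] at hK
  have hint := (integrableOn_image_iff_integrableOn_abs_deriv_smul measurableSet_Ioo
    hderiv hinj _).1 (image_subst_Ioo hs hb ▸ integrableOn_kIntegrand hk')
  rw [integral_image_eq_integral_abs_deriv_smul measurableSet_Ioo hderiv hinj,
    setIntegral_congr_fun measurableSet_Ioo hintegrand, integral_const_mul] at hK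
  rw [integrableOn_congr_fun hintegrand measurableSet_Ioo, IntegrableOn,
    integrable_const_mul_iff hB.ne'.isUnit] at hint
  exact ⟨hint, (eq_div_iff hB.ne').2 (by rw [hK, mul_comm])⟩

end Substitution

theorem stmt_0 (a b : ℝ) (ha : 1 < a) (hab : a < b) :
    (∫ x in (0:ℝ)..(1/b),
        1 / Real.sqrt ((x^2 - a^2) * (x^2 - 1/a^2) * (x^2 - b^2) * (x^2 - 1/b^2))) =
      (1/2) * ((b / (1 + b^2)) * ellipticK (b * (1 + a^2) / (a * (1 + b^2))) +
        (b / (b^2 - 1)) * ellipticK (b * (a^2 - 1) / (a * (b^2 - 1)))) := by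
  have hone : (1 : ℝ) ^ 2 = 1 := one_pow 2
  have hnegone : (-1 : ℝ) ^ 2 = 1 := neg_one_sq
  have ha0 : a ≠ 0 := (by linarith : 0 < a).ne'
  have hb : 1 < b := ha.trans hab
  obtain ⟨hint₁, hK₁⟩ := integrableOn_and_setIntegral_one_sub_mul_sq_div_sqrt hone ha0 hb
    (sq_add_div_lt_sq_add_div hone ha hab)
  obtain ⟨hint₂, hK₂⟩ := integrableOn_and_setIntegral_one_sub_mul_sq_div_sqrt hnegone ha0 hb
    (sq_add_div_lt_sq_add_div hnegone ha hab)
  have hb0 : b ≠ 0 := (by linarith : 0 < b).ne'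
  have hb1 : b ^ 2 - 1 ≠ 0 := by nlinarith
  have hk₁ : (a + 1 / a) / (b + 1 / b) = b * (1 + a ^ 2) / (a * (1 + b ^ 2)) := by
    field_simp
    ring
  have hk₂ : (a - 1 / a) / (b - 1 / b) = b * (a ^ 2 - 1) / (a * (b ^ 2 - 1)) := by
    field_simp
  rw [hk₁] at hK₁
  simp only [neg_div, ← sub_eq_add_neg] at hK₂
  rw [hk₂] at hK₂
  have hsplit : ∀ x : ℝ, 1 / √((x^2 - a^2) * (x^2 - 1/a^2) * (x^2 - b^2) * (x^2 - 1/b^2)) =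
      1 / 2 * ((1 - 1 * x ^ 2) / √((x^2 - a^2) * (x^2 - 1/a^2) * (x^2 - b^2) * (x^2 - 1/b^2)) +
        (1 - -1 * x ^ 2) / √((x^2 - a^2) * (x^2 - 1/a^2) * (x^2 - b^2) * (x^2 - 1/b^2))) := by
    intro x
    ring
  rw [intervalIntegral.integral_of_le (by positivity), integral_Ioc_eq_integral_Ioo]
  simp_rw [hsplit]
  rw [integral_const_mul, integral_add hint₁ hint₂, hK₁, hK₂]
  field_simp
  ring
end

section
/- Let b be a real number with b > 1. Then π = 2 b² (b²−1) K( 2b/(1+b²) ) / ( (1+b²)·( 2(b²−1)·F₁(1/2; 1, 1/2; 1 | 1/b², 1/b⁴) − b² ) ). -/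
open MeasureTheory Real

/-!
The substitution `t ↦ (1 + b²) t / (b² + t²)` (a Landen transformation) turns `K(2b / (1 + b²))`
into `(1 + b²) ∫₀¹ dt / R(t)` with `R(t) = √((1 - t²)(b⁴ - t²))`, and `u = t²` turns the Euler
integral of `F₁(1/2; 1, 1/2; 1 | 1/b², 1/b⁴)` into `π⁻¹ ∫₀¹ 2b⁴ dt / ((b² - t²) R(t))`.
By partial fractions `2b⁴ / (b² - t²) = b² + b² (b² + t²) / (b² - t²)`, and the second part is
elementary: `(b² - 1)(b² + t²) / ((b² - t²) R(t))` is the derivative of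
`arcsin ((b² - 1) t / (b² - t²))`, which runs from `0` to `π / 2`. Hence
`π F₁ = b² ∫₀¹ dt / R + π b² / (2 (b² - 1))`, and eliminating `∫₀¹ dt / R` gives the formula.
-/

open Set intervalIntegral

theorem intervalIntegral.integral_comp_smul_deriv_of_deriv_pos {E : Type*} [NormedAddCommGroup E]
    [NormedSpace ℝ E] {a b : ℝ} (hab : a ≤ b) {φ φ' : ℝ → ℝ} (hφ : ContinuousOn φ (Icc a b))
    (hφ' : ∀ t ∈ Ioo a b, HasDerivAt φ (φ' t) t) (hpos : ∀ t ∈ Ioo a b, 0 < φ' t)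
    (g : ℝ → E) :
    ∫ t in a..b, φ' t • g (φ t) = ∫ x in φ a..φ b, g x := by
  have hmono : StrictMonoOn φ (Icc a b) :=
    strictMonoOn_of_hasDerivWithinAt_pos (convex_Icc a b) hφ
      (by simpa using fun t ht => (hφ' t ht).hasDerivWithinAt)
      (by simpa using hpos)
  have himage : φ '' Ioo a b = Ioo (φ a) (φ b) := by
    refine (Subset.antisymm ?_ (intermediate_value_Ioo hab hφ))
    rintro _ ⟨t, ht, rfl⟩
    exact ⟨hmono (left_mem_Icc.2 hab) (Ioo_subset_Icc_self ht) ht.1,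
      hmono (Ioo_subset_Icc_self ht) (right_mem_Icc.2 hab) ht.2⟩
  rw [integral_of_le hab, integral_of_le (hmono.monotoneOn (left_mem_Icc.2 hab)
      (right_mem_Icc.2 hab) hab), integral_Ioc_eq_integral_Ioo, integral_Ioc_eq_integral_Ioo,
    ← himage, integral_image_eq_integral_abs_deriv_smul measurableSet_Ioo
      (fun t ht => (hφ' t ht).hasDerivWithinAt) (hmono.injOn.mono Ioo_subset_Icc_self)]
  exact setIntegral_congr_fun measurableSet_Ioo fun t ht => by rw [abs_of_pos (hpos t ht)]

theorem Real.rpow_neg_one_half {x : ℝ} (hx : 0 ≤ x) : x ^ (-(1 / 2) : ℝ) = (√x)⁻¹ := by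
  rw [rpow_neg hx, sqrt_eq_rpow]

theorem intervalIntegrable_div_sqrt_one_sub {h : ℝ → ℝ} (hh : ContinuousOn h (Icc 0 1)) :
    IntervalIntegrable (fun t => h t / √(1 - t)) volume 0 1 := by
  have hrpow : IntervalIntegrable (fun t : ℝ => (1 - t) ^ (-(1 / 2) : ℝ)) volume 0 1 := by
    simpa using (intervalIntegrable_rpow' (a := 0) (b := 1) (r := -(1 / 2))
      (by norm_num)).comp_sub_left 1 |>.symm
  refine (hrpow.mul_continuousOn (by simpa using hh)).congr_uIoo fun t ht => ?_
  rw [uIoo_of_le zero_le_one] at ht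
  show (1 - t) ^ (-(1 / 2) : ℝ) * h t = h t / √(1 - t)
  rw [rpow_neg_one_half (by linarith [ht.2]), div_eq_inv_mul]

namespace LandenPi

noncomputable def radical (b t : ℝ) : ℝ := √((1 - t ^ 2) * (b ^ 4 - t ^ 2))

theorem sq_lt_pow_four {b t : ℝ} (hb : 1 < b) (ht : t ^ 2 ≤ 1) : t ^ 2 < b ^ 4 := by
  nlinarith [sq_nonneg (b ^ 2 - 1)]

theorem radical_pos {b t : ℝ} (hb : 1 < b) (ht : t ^ 2 < 1) : 0 < radical b t :=
  sqrt_pos.2 (mul_pos (by linarith) (by linarith [sq_lt_pow_four hb ht.le]))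

theorem radical_sq {b t : ℝ} (hb : 1 < b) (ht : t ^ 2 ≤ 1) :
    radical b t ^ 2 = (1 - t ^ 2) * (b ^ 4 - t ^ 2) :=
  sq_sqrt (mul_nonneg (by linarith) (by linarith [sq_lt_pow_four hb ht]))

theorem intervalIntegrable_div_radical {b : ℝ} (hb : 1 < b) {p : ℝ → ℝ}
    (hp : ContinuousOn p (Icc 0 1)) :
    IntervalIntegrable (fun t => p t / radical b t) volume 0 1 := by
  have hpos : ∀ t ∈ Icc (0 : ℝ) 1, 0 < (1 + t) * (b ^ 4 - t ^ 2) := fun t ht =>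
    mul_pos (by linarith [ht.1])
      (by linarith [sq_lt_pow_four hb (t := t) (by nlinarith [ht.1, ht.2])])
  have hcont : ContinuousOn (fun t => p t / √((1 + t) * (b ^ 4 - t ^ 2))) (Icc 0 1) :=
    hp.div (by fun_prop) fun t ht => (sqrt_pos.2 (hpos t ht)).ne'
  refine (intervalIntegrable_div_sqrt_one_sub hcont).congr_uIoo fun t ht => ?_
  rw [uIoo_of_le zero_le_one] at ht
  have hfactor : (1 - t ^ 2) * (b ^ 4 - t ^ 2) = (1 - t) * ((1 + t) * (b ^ 4 - t ^ 2)) := by ring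
  rw [radical, hfactor, sqrt_mul (by linarith [ht.2] : 0 ≤ 1 - t), mul_comm, ← div_div]

theorem ellipticK_eq_integral_div_radical {b : ℝ} (hb : 1 < b) :
    ellipticK (2 * b / (1 + b ^ 2)) = (1 + b ^ 2) * ∫ t in (0 : ℝ)..1, 1 / radical b t := by
  have hden : ∀ t : ℝ, 0 < b ^ 2 + t ^ 2 := fun t => by positivity
  set φ : ℝ → ℝ := fun t => (1 + b ^ 2) * t / (b ^ 2 + t ^ 2)
  set φ' : ℝ → ℝ := fun t => (1 + b ^ 2) * (b ^ 2 - t ^ 2) / (b ^ 2 + t ^ 2) ^ 2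
  have hφ' : ∀ t, HasDerivAt φ (φ' t) t := fun t => by
    refine (((hasDerivAt_id t).const_mul (1 + b ^ 2)).div
      ((hasDerivAt_pow 2 t).const_add (b ^ 2)) (hden t).ne').congr_deriv ?_
    simp only [φ', id]
    ring
  have hφ'_pos : ∀ t ∈ Ioo (0 : ℝ) 1, 0 < φ' t := fun t ht => by
    have : t ^ 2 < b ^ 2 := by nlinarith [ht.1, ht.2]
    exact div_pos (mul_pos (by positivity) (by linarith)) (by positivity)
  have hsubst := integral_comp_smul_deriv_of_deriv_pos zero_le_one
    (fun t _ => (hφ' t).continuousAt.continuousWithinAt) (fun t _ => hφ' t) hφ'_pos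
    (fun x => 1 / √((1 - x ^ 2) * (1 - (2 * b / (1 + b ^ 2)) ^ 2 * x ^ 2)))
  have hφ0 : φ 0 = 0 := by simp [φ]
  have hφ1 : φ 1 = 1 := by simp only [φ]; field_simp; ring
  rw [hφ0, hφ1] at hsubst
  rw [ellipticK, ← hsubst, ← intervalIntegral.integral_const_mul]
  refine integral_congr_Ioo_of_le zero_le_one fun t ht => ?_
  have ht2 : t ^ 2 < 1 := by nlinarith [ht.1, ht.2]
  have hbt : 0 < b ^ 2 - t ^ 2 := by nlinarith
  have hq : 0 < (b ^ 2 - t ^ 2) / (b ^ 2 + t ^ 2) ^ 2 := by positivity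
  have hkey : (1 - φ t ^ 2) * (1 - (2 * b / (1 + b ^ 2)) ^ 2 * φ t ^ 2)
      = (radical b t * ((b ^ 2 - t ^ 2) / (b ^ 2 + t ^ 2) ^ 2)) ^ 2 := by
    rw [mul_pow, radical_sq hb ht2.le]
    simp only [φ]
    field_simp
    ring
  have hr := radical_pos hb ht2
  simp only [smul_eq_mul]
  rw [hkey, sqrt_sq (by positivity)]
  simp only [φ']
  field_simp

theorem pi_mul_appellF1_eq_integral {b : ℝ} (hb : 1 < b) :
    π * appellF1 (1 / 2) 1 (1 / 2) 1 (1 / b ^ 2) (1 / b ^ 4)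
      = ∫ t in (0 : ℝ)..1, 2 * b ^ 4 / (b ^ 2 - t ^ 2) / radical b t := by
  have hΓ : Gamma 1 / (Gamma (1 / 2) * Gamma (1 - 1 / 2)) = 1 / π := by
    rw [show (1 : ℝ) - 1 / 2 = 1 / 2 by norm_num, Gamma_one, Gamma_one_half_eq,
      mul_self_sqrt pi_pos.le]
  have hsubst := integral_comp_smul_deriv_of_deriv_pos zero_le_one
    (φ := fun t => t ^ 2) (φ' := fun t => 2 * t) (by fun_prop)
    (fun t _ => by simpa using hasDerivAt_pow 2 t)
    (fun t ht => by simpa using ht.1)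
    (fun u => u ^ (1 / 2 - 1 : ℝ) * (1 - u) ^ (1 - 1 / 2 - 1 : ℝ)
      * (1 - 1 / b ^ 2 * u) ^ (-1 : ℝ) * (1 - 1 / b ^ 4 * u) ^ (-(1 / 2) : ℝ))
  simp only [ne_eq, OfNat.ofNat_ne_zero, not_false_eq_true, zero_pow, one_pow, smul_eq_mul]
    at hsubst
  rw [appellF1, hΓ, ← mul_assoc, mul_one_div_cancel pi_ne_zero, one_mul, ← hsubst]
  refine integral_congr_Ioo_of_le zero_le_one fun t ht => ?_
  have ht2 : t ^ 2 < 1 := by nlinarith [ht.1, ht.2]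
  have hb4 : 0 < b ^ 4 - t ^ 2 := by linarith [sq_lt_pow_four hb ht2.le]
  have hbt : 0 < b ^ 2 - t ^ 2 := by nlinarith
  have hx : 1 - 1 / b ^ 2 * t ^ 2 = (b ^ 2 - t ^ 2) / b ^ 2 := by field_simp
  have hy : 1 - 1 / b ^ 4 * t ^ 2 = (b ^ 4 - t ^ 2) / (b ^ 2) ^ 2 := by field_simp
  rw [show (1 : ℝ) / 2 - 1 = -(1 / 2) by norm_num,
    show (1 : ℝ) - 1 / 2 - 1 = -(1 / 2) by norm_num, hx, hy, rpow_neg_one_half (by positivity),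
    rpow_neg_one_half (by linarith), rpow_neg_one_half (by positivity), rpow_neg_one,
    sqrt_div' _ (by positivity), sqrt_sq (by positivity : (0 : ℝ) ≤ b ^ 2), sqrt_sq ht.1.le,
    radical, sqrt_mul (by linarith)]
  have := ht.1.ne'
  have := sqrt_pos.2 hb4
  have := sqrt_pos.2 (by linarith : 0 < 1 - t ^ 2)
  field_simp

theorem integral_div_radical_eq_pi_div_two {b : ℝ} (hb : 1 < b) :
    ∫ t in (0 : ℝ)..1, (b ^ 2 - 1) * (b ^ 2 + t ^ 2) / (b ^ 2 - t ^ 2) / radical b t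
      = π / 2 := by
  have hbt : ∀ t ∈ Icc (0 : ℝ) 1, 0 < b ^ 2 - t ^ 2 := fun t ht => by nlinarith [ht.1, ht.2]
  have hcont : ContinuousOn (fun t => (b ^ 2 - 1) * t / (b ^ 2 - t ^ 2)) (Icc 0 1) :=
    ContinuousOn.div (by fun_prop) (by fun_prop) fun t ht => (hbt t ht).ne'
  have hderiv : ∀ t ∈ Ioo (0 : ℝ) 1,
      HasDerivAt (fun t => arcsin ((b ^ 2 - 1) * t / (b ^ 2 - t ^ 2)))
      ((b ^ 2 - 1) * (b ^ 2 + t ^ 2) / (b ^ 2 - t ^ 2) / radical b t) t := fun t ht => by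
    have ht2 : t ^ 2 < 1 := by nlinarith [ht.1, ht.2]
    have hbt := hbt t (Ioo_subset_Icc_self ht)
    have hr := radical_pos hb ht2
    have hcos : 1 - ((b ^ 2 - 1) * t / (b ^ 2 - t ^ 2)) ^ 2
        = (radical b t / (b ^ 2 - t ^ 2)) ^ 2 := by
      rw [div_pow (radical b t), radical_sq hb ht2.le]
      field_simp
      ring
    have hsin : ((b ^ 2 - 1) * t / (b ^ 2 - t ^ 2)) ^ 2 < 1 := by
      have : 0 < (radical b t / (b ^ 2 - t ^ 2)) ^ 2 := by positivity
      linarith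
    have hdg : HasDerivAt (fun t => (b ^ 2 - 1) * t / (b ^ 2 - t ^ 2))
        ((b ^ 2 - 1) * (b ^ 2 + t ^ 2) / (b ^ 2 - t ^ 2) ^ 2) t :=
      (((hasDerivAt_id t).const_mul (b ^ 2 - 1)).div
        ((hasDerivAt_pow 2 t).const_sub (b ^ 2)) hbt.ne').congr_deriv (by simp only [id]; ring)
    refine ((hasDerivAt_arcsin (by nlinarith) (by nlinarith)).comp t hdg).congr_deriv ?_
    rw [hcos, sqrt_sq (by positivity)]
    field_simp
  rw [integral_eq_sub_of_hasDerivAt_of_le zero_le_one (continuous_arcsin.comp_continuousOn hcont)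
    hderiv (intervalIntegrable_div_radical hb
      (ContinuousOn.div (by fun_prop) (by fun_prop) fun t ht => (hbt t ht).ne'))]
  have hb2 : b ^ 2 - 1 ≠ 0 := by nlinarith
  simp [hb2]

theorem pi_mul_appellF1_eq {b : ℝ} (hb : 1 < b) :
    π * appellF1 (1 / 2) 1 (1 / 2) 1 (1 / b ^ 2) (1 / b ^ 4)
      = b ^ 2 * (∫ t in (0 : ℝ)..1, 1 / radical b t) + π * b ^ 2 / (2 * (b ^ 2 - 1)) := by
  have hbt : ∀ t ∈ Icc (0 : ℝ) 1, 0 < b ^ 2 - t ^ 2 := fun t ht => by nlinarith [ht.1, ht.2]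
  have hb2 : b ^ 2 - 1 ≠ 0 := by nlinarith
  have hsplit : EqOn (fun t => 2 * b ^ 4 / (b ^ 2 - t ^ 2) / radical b t)
      (fun t => b ^ 2 * (1 / radical b t)
        + b ^ 2 / (b ^ 2 - 1) * ((b ^ 2 - 1) * (b ^ 2 + t ^ 2) / (b ^ 2 - t ^ 2) / radical b t))
      (uIcc 0 1) := fun t ht => by
    have := (hbt t (by simpa using ht)).ne'
    field_simp
    ring
  rw [pi_mul_appellF1_eq_integral hb, integral_congr hsplit, intervalIntegral.integral_add,
    intervalIntegral.integral_const_mul, intervalIntegral.integral_const_mul,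
    integral_div_radical_eq_pi_div_two hb]
  · field_simp
  · exact (intervalIntegrable_div_radical hb continuousOn_const).const_mul _
  · exact (intervalIntegrable_div_radical hb
      (ContinuousOn.div (by fun_prop) (by fun_prop) fun t ht => (hbt t ht).ne')).const_mul _

end LandenPi

open LandenPi in
theorem stmt_2 (b : ℝ) (hb : 1 < b) :
    π = 2 * b^2 * (b^2 - 1) * ellipticK (2*b / (1 + b^2)) /
        ((1 + b^2) * (2 * (b^2 - 1) * appellF1 (1/2) 1 (1/2) 1 (1/b^2) (1/b^4) - b^2)) := by
  have hI : 0 < ∫ t in (0 : ℝ)..1, 1 / radical b t :=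
    intervalIntegral_pos_of_pos_on (intervalIntegrable_div_radical hb continuousOn_const)
      (fun t ht => one_div_pos.2 (radical_pos hb (by nlinarith [ht.1, ht.2]))) zero_lt_one
  have hF := pi_mul_appellF1_eq hb
  have hb2 : b ^ 2 - 1 ≠ 0 := by nlinarith
  have hD : 2 * (b ^ 2 - 1) * appellF1 (1/2) 1 (1/2) 1 (1/b^2) (1/b^4) - b ^ 2
      = 2 * b ^ 2 * (b ^ 2 - 1) * (∫ t in (0 : ℝ)..1, 1 / radical b t) / π := by
    have hc : 2 * (b ^ 2 - 1) * (π * b ^ 2 / (2 * (b ^ 2 - 1))) = π * b ^ 2 := by field_simp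
    rw [eq_div_iff pi_ne_zero]
    linear_combination 2 * (b ^ 2 - 1) * hF + hc
  rw [ellipticK_eq_integral_div_radical hb, hD]
  field_simp
end

section
/- Let a, b be real numbers with 1 < a < b. Then ∫_{1/a}^{a} dx/√((x²−a²)(x²−1/a²)(x²−b²)(x²−1/b²)) = (b/(b²−1))·K( b(a²−1)/(a(b²−1)) ). (The polynomial (x²−a²)(x²−1/a²)(x²−b²)(x²−1/b²) is nonnegative for x ∈ [1/a, a], so the integrand is real.) -/
/-!
Put `A = a - a⁻¹`, `B = b - b⁻¹`. The substitution `x - x⁻¹ = A sin θ` maps `[-π/2, π/2]`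
increasingly onto `[1/a, a]`; since `(x² - c²)(x² - c⁻²) = x²((x - x⁻¹)² - (c - c⁻¹)²)`, it turns
the integrand into `dθ / ((x² + 1) √(B² - A² sin² θ))`. Reflecting `θ ↦ -θ` sends `x` to `x⁻¹`,
and `1/(x² + 1) + 1/(x⁻² + 1) = 1`, so folding the interval at `0` leaves
`∫₀^{π/2} dθ / √(B² - A² sin² θ) = K(A/B) / B`.
-/

open MeasureTheory Real

open Set intervalIntegral

/-- The positive root `x` of `x - x⁻¹ = u`, i.e. the inverse of `x ↦ x - x⁻¹` on `(0, ∞)`. -/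
noncomputable def subInvRoot (u : ℝ) : ℝ := (u + √(u ^ 2 + 4)) / 2

lemma subInvRoot_pos (u : ℝ) : 0 < subInvRoot u := by
  have h : |u| < √(u ^ 2 + 4) := by
    rw [← sqrt_sq_eq_abs]
    exact sqrt_lt_sqrt (sq_nonneg _) (by linarith)
  unfold subInvRoot
  linarith [neg_abs_le u]

lemma subInvRoot_mul_subInvRoot_neg (u : ℝ) : subInvRoot u * subInvRoot (-u) = 1 := by
  have h := sq_sqrt (by positivity : (0 : ℝ) ≤ u ^ 2 + 4)
  unfold subInvRoot
  rw [neg_sq]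
  linear_combination h / 4

lemma subInvRoot_neg (u : ℝ) : subInvRoot (-u) = (subInvRoot u)⁻¹ :=
  (eq_inv_of_mul_eq_one_right (subInvRoot_mul_subInvRoot_neg u))

lemma subInvRoot_sub_inv (u : ℝ) : subInvRoot u - (subInvRoot u)⁻¹ = u := by
  rw [← subInvRoot_neg]
  unfold subInvRoot
  rw [neg_sq]
  ring

lemma subInvRoot_sub_inv_self {c : ℝ} (hc : 0 < c) : subInvRoot (c - c⁻¹) = c := by
  have h : (c - c⁻¹) ^ 2 + 4 = (c + c⁻¹) ^ 2 := by field_simp; ring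
  unfold subInvRoot
  rw [h, sqrt_sq (by positivity)]
  ring

lemma inv_subInvRoot_sq_add_one_add_neg (u : ℝ) :
    (subInvRoot u ^ 2 + 1)⁻¹ + (subInvRoot (-u) ^ 2 + 1)⁻¹ = 1 := by
  have hx := (subInvRoot_pos u).ne'
  rw [subInvRoot_neg]
  field_simp
  ring

@[fun_prop]
lemma continuous_subInvRoot : Continuous subInvRoot := by
  unfold subInvRoot
  fun_prop

lemma hasDerivAt_subInvRoot (u : ℝ) :
    HasDerivAt subInvRoot (subInvRoot u ^ 2 / (subInvRoot u ^ 2 + 1)) u := by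
  have hs : 0 < √(u ^ 2 + 4) := sqrt_pos.2 (by positivity)
  have hx := subInvRoot_pos u
  have hsqrt : HasDerivAt (fun u => √(u ^ 2 + 4)) (2 * u / (2 * √(u ^ 2 + 4))) u := by
    simpa using ((hasDerivAt_pow 2 u).add_const 4).sqrt (by positivity)
  refine (((hasDerivAt_id u).add hsqrt).div_const 2).congr_deriv ?_
  have hsx : √(u ^ 2 + 4) = 2 * subInvRoot u - u := by unfold subInvRoot; ring
  have hxx : subInvRoot u ^ 2 = u * subInvRoot u + 1 := by
    have h := subInvRoot_sub_inv u
    field_simp at h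
    linear_combination h
  rw [hsx] at hs ⊢
  field_simp
  linear_combination -2 * subInvRoot u * hxx

lemma sq_sub_sq_mul_sq_sub_one_div_sq {x c : ℝ} (hx : x ≠ 0) (hc : c ≠ 0) :
    (x ^ 2 - c ^ 2) * (x ^ 2 - 1 / c ^ 2) = x ^ 2 * ((x - x⁻¹) ^ 2 - (c - c⁻¹) ^ 2) := by
  field_simp
  ring

lemma integral_deriv_mul_comp_of_le {a b : ℝ} {f f' g : ℝ → ℝ} (hab : a ≤ b)
    (hf : ContinuousOn f (Icc a b)) (hff' : ∀ x ∈ Ioo a b, HasDerivAt f (f' x) x)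
    (hf' : ∀ x ∈ Ioo a b, 0 ≤ f' x) :
    ∫ x in a..b, f' x * g (f x) = ∫ u in f a..f b, g u := by
  rw [← uIcc_of_le hab] at hf
  have hI : Ioo (min a b) (max a b) = Ioo a b := by rw [min_eq_left hab, max_eq_right hab]
  rw [← hI] at hff' hf'
  simpa only [smul_eq_mul, Function.comp_apply]
    using integral_deriv_smul_comp_of_deriv_nonneg (g := g) hf hff' hf'

lemma integral_neg_self_eq_integral_add_comp_neg {E : Type*} [NormedAddCommGroup E]
    [NormedSpace ℝ E] {f : ℝ → E} (hf : Continuous f) (c : ℝ) :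
    ∫ x in -c..c, f x = ∫ x in 0..c, (f x + f (-x)) := by
  rw [integral_add (f := f) (g := fun x => f (-x)) (hf.intervalIntegrable _ _)
      ((hf.comp continuous_neg).intervalIntegrable _ _),
    integral_comp_neg, neg_zero, add_comm,
    integral_add_adjacent_intervals (hf.intervalIntegrable _ _) (hf.intervalIntegrable _ _)]

lemma ellipticK_eq_integral_sin (k : ℝ) :
    ellipticK k = ∫ θ in (0:ℝ)..(π / 2), 1 / √(1 - k ^ 2 * sin θ ^ 2) := by
  have hcos : ∀ θ ∈ Ioo 0 (π / 2), 0 < cos θ := fun θ hθ =>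
    cos_pos_of_mem_Ioo ⟨by linarith [hθ.1, pi_pos], hθ.2⟩
  have hsubst := integral_deriv_mul_comp_of_le
    (g := fun t => 1 / √((1 - t ^ 2) * (1 - k ^ 2 * t ^ 2))) (by positivity)
    continuous_sin.continuousOn (fun θ _ => hasDerivAt_sin θ)
    (fun θ hθ => (hcos θ hθ).le)
  rw [sin_zero, sin_pi_div_two] at hsubst
  rw [ellipticK, ← hsubst]
  refine integral_congr_Ioo_of_le (by positivity) fun θ hθ => ?_
  rw [← cos_sq', sqrt_mul (sq_nonneg _), sqrt_sq (hcos θ hθ).le, mul_one_div,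
    div_mul_cancel_left₀ (hcos θ hθ).ne', one_div]

lemma integral_one_div_sqrt_sq_sub_sq_mul_sin_sq (A : ℝ) {B : ℝ} (hB : 0 < B) :
    ∫ θ in (0:ℝ)..(π / 2), 1 / √(B ^ 2 - A ^ 2 * sin θ ^ 2) = B⁻¹ * ellipticK (A / B) := by
  rw [ellipticK_eq_integral_sin, ← intervalIntegral.integral_const_mul]
  congr 1 with θ
  have h : B ^ 2 - A ^ 2 * sin θ ^ 2 = B ^ 2 * (1 - (A / B) ^ 2 * sin θ ^ 2) := by
    field_simp
  rw [h, sqrt_mul (sq_nonneg B), sqrt_sq hB.le, one_div, mul_inv, one_div]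

lemma integral_quartic_eq_integral_sin {a b : ℝ} (ha : 1 < a) (hb : b ≠ 0) :
    ∫ x in (1/a : ℝ)..a, 1 / √((x^2 - a^2) * (x^2 - 1/a^2) * (x^2 - b^2) * (x^2 - 1/b^2)) =
      ∫ θ in -(π / 2)..(π / 2), (subInvRoot ((a - a⁻¹) * sin θ) ^ 2 + 1)⁻¹ /
        √((b - b⁻¹) ^ 2 - (a - a⁻¹) ^ 2 * sin θ ^ 2) := by
  have ha0 : 0 < a := by linarith
  set A := a - a⁻¹ with hA_def
  have hA : 0 < A := by linarith [inv_lt_one_of_one_lt₀ ha]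
  set ψ : ℝ → ℝ := fun θ => subInvRoot (A * sin θ) with hψ_def
  have hψ : ∀ θ, HasDerivAt ψ (ψ θ ^ 2 / (ψ θ ^ 2 + 1) * (A * cos θ)) θ := fun θ =>
    (hasDerivAt_subInvRoot _).comp θ ((hasDerivAt_sin θ).const_mul A)
  have hψ_left : ψ (-(π / 2)) = 1 / a := by
    simp only [hψ_def, sin_neg, sin_pi_div_two, mul_neg_one, subInvRoot_neg, hA_def,
      subInvRoot_sub_inv_self ha0, one_div]
  have hψ_right : ψ (π / 2) = a := by
    simp only [hψ_def, sin_pi_div_two, mul_one, hA_def, subInvRoot_sub_inv_self ha0]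
  have hsubst := integral_deriv_mul_comp_of_le (a := -(π / 2)) (b := π / 2) (f := ψ)
    (g := fun x => 1 / √((x^2 - a^2) * (x^2 - 1/a^2) * (x^2 - b^2) * (x^2 - 1/b^2)))
    (by linarith [pi_pos]) (by fun_prop : Continuous ψ).continuousOn
    (fun θ _ => hψ θ) (fun θ hθ => by have := cos_pos_of_mem_Ioo hθ; positivity)
  rw [hψ_left, hψ_right] at hsubst
  rw [← hsubst]
  refine integral_congr_Ioo_of_le (by linarith [pi_pos]) fun θ hθ => ?_
  have hcos := cos_pos_of_mem_Ioo hθ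
  have hx := subInvRoot_pos (A * sin θ)
  have hsub := subInvRoot_sub_inv (A * sin θ)
  simp only [hψ_def]
  set x := subInvRoot (A * sin θ)
  have hquartic : (x^2 - a^2) * (x^2 - 1/a^2) * (x^2 - b^2) * (x^2 - 1/b^2) =
      (x ^ 2 * (A * cos θ)) ^ 2 * ((b - b⁻¹) ^ 2 - A ^ 2 * sin θ ^ 2) := by
    rw [sq_sub_sq_mul_sq_sub_one_div_sq hx.ne' ha0.ne',
      mul_assoc, sq_sub_sq_mul_sq_sub_one_div_sq hx.ne' hb, hsub, ← hA_def]
    linear_combination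
      (-(x ^ 4 * A ^ 2) * ((b - b⁻¹) ^ 2 - A ^ 2 * sin θ ^ 2)) * sin_sq_add_cos_sq θ
  rw [hquartic, sqrt_mul (sq_nonneg _), sqrt_sq (by positivity)]
  field_simp

lemma integral_inv_subInvRoot_sq_add_one_div_sqrt {A B : ℝ} (hAB : |A| < B) :
    ∫ θ in -(π / 2)..(π / 2), (subInvRoot (A * sin θ) ^ 2 + 1)⁻¹ / √(B ^ 2 - A ^ 2 * sin θ ^ 2) =
      B⁻¹ * ellipticK (A / B) := by
  have hB : 0 < B := (abs_nonneg A).trans_lt hAB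
  have hE : ∀ θ, 0 < B ^ 2 - A ^ 2 * sin θ ^ 2 := fun θ => by
    have := sq_lt_sq' (neg_lt_of_abs_lt hAB) (lt_of_abs_lt hAB)
    nlinarith [sin_sq_le_one θ, sq_nonneg A]
  have hcont : Continuous fun θ =>
      (subInvRoot (A * sin θ) ^ 2 + 1)⁻¹ / √(B ^ 2 - A ^ 2 * sin θ ^ 2) :=
    .div (.inv₀ (by fun_prop) fun θ => by positivity) (by fun_prop)
      fun θ => (sqrt_pos.2 (hE θ)).ne'
  rw [integral_neg_self_eq_integral_add_comp_neg hcont,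
    ← integral_one_div_sqrt_sq_sub_sq_mul_sin_sq A hB]
  refine integral_congr fun θ _ => ?_
  rw [sin_neg, mul_neg, neg_sq, ← add_div, inv_subInvRoot_sq_add_one_add_neg]

theorem stmt_3 (a b : ℝ) (ha : 1 < a) (hab : a < b) :
    (∫ x in (1/a : ℝ)..a,
        1 / Real.sqrt ((x^2 - a^2) * (x^2 - 1/a^2) * (x^2 - b^2) * (x^2 - 1/b^2))) =
      (b / (b^2 - 1)) * ellipticK (b * (a^2 - 1) / (a * (b^2 - 1))) := by
  have ha0 : 0 < a := by linarith
  have hb0 : 0 < b := by linarith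
  have hAB : |a - a⁻¹| < b - b⁻¹ := by
    rw [abs_of_pos (by linarith [inv_lt_one_of_one_lt₀ ha])]
    linarith [inv_strictAnti₀ ha0 hab]
  rw [integral_quartic_eq_integral_sin ha hb0.ne', integral_inv_subInvRoot_sq_add_one_div_sqrt hAB]
  congr 2 <;> field_simp
end

section
/- Let a, b be real numbers with 1 < a < b. Then ∫_{b}^{∞} dx/√((x²−a²)(x²−1/a²)(x²−b²)(x²−1/b²)) = (1/2)·( (b/(b²−1))·K( b(a²−1)/(a(b²−1)) ) − (b/(b²+1))·K( b(a²+1)/(a(b²+1)) ) ). (The polynomial (x²−a²)(x²−1/a²)(x²−b²)(x²−1/b²) is nonnegative for x ∈ [b,∞), so the integrand is real.) -/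
open MeasureTheory Real

open Set Filter

/-! With `ε = ±1`, the substitution `p = x + ε / x` gives
`(x² - a²)(x² - 1/a²) = x² (p² - (a + ε/a)²)`, so the quartic becomes
`x⁴ (p² - A²)(p² - B²)` with `A = a + ε/a`, `B = b + ε/b`, while `dp = (1 - ε/x²) dx`.
Since `2 / x² = (1 + 1/x²) - (1 - 1/x²)`, the integral is half the difference of the two
integrals `∫_B^∞ dp / √((p² - A²)(p² - B²))`, and `p = B / s` turns each of them into
`K(A/B) / B`. -/

lemma integrableOn_ellipticK_integrand {k : ℝ} (hk : k ^ 2 < 1) :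
    IntegrableOn (fun t : ℝ => 1 / √((1 - t ^ 2) * (1 - k ^ 2 * t ^ 2))) (Ioo 0 1) := by
  have hdom : IntegrableOn (fun t : ℝ => (√(1 - k ^ 2))⁻¹ * (1 - t) ^ (-(1 / 2) : ℝ))
      (Ioo 0 1) := by
    have h := (intervalIntegral.intervalIntegrable_rpow' (r := (-(1 / 2) : ℝ)) (by norm_num)
      (a := 0) (b := 1)).comp_sub_left 1
    simp only [sub_zero, sub_self] at h
    exact ((intervalIntegrable_iff_integrableOn_Ioo_of_le zero_le_one).1 h.symm).const_mul _
  refine hdom.mono' (Measurable.aestronglyMeasurable (by fun_prop))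
    (ae_restrict_of_forall_mem measurableSet_Ioo fun t ht => ?_)
  obtain ⟨ht0, ht1⟩ := ht
  have h1t : 0 < 1 - t := by linarith
  have hk' : 0 < 1 - k ^ 2 := by linarith
  have ht2 : t ^ 2 ≤ 1 := by nlinarith
  have hle : (1 - t) * (1 - k ^ 2) ≤ (1 - t ^ 2) * (1 - k ^ 2 * t ^ 2) :=
    mul_le_mul (by nlinarith) (by nlinarith [mul_le_mul_of_nonneg_left ht2 (sq_nonneg k)])
      hk'.le (by nlinarith)
  rw [Real.norm_eq_abs, abs_of_nonneg (by positivity), Real.rpow_neg h1t.le, ← Real.sqrt_eq_rpow,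
    ← mul_inv, ← Real.sqrt_mul hk'.le, mul_comm (1 - k ^ 2), one_div]
  exact inv_anti₀ (by positivity) (Real.sqrt_le_sqrt hle)

lemma ellipticK_eq_integral_Ioo (k : ℝ) :
    ellipticK k = ∫ t in Ioo 0 1, 1 / √((1 - t ^ 2) * (1 - k ^ 2 * t ^ 2)) := by
  rw [ellipticK, intervalIntegral.integral_of_le zero_le_one, integral_Ioc_eq_integral_Ioo]

lemma image_div_Ioo_zero_one {B : ℝ} (hB : 0 < B) :
    (fun s : ℝ => B / s) '' Ioo 0 1 = Ioi B := by
  ext p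
  constructor
  · rintro ⟨s, ⟨hs0, hs1⟩, rfl⟩
    exact (lt_div_iff₀ hs0).2 (by nlinarith)
  · intro hp
    have hp0 : 0 < p := hB.trans hp
    exact ⟨B / p, ⟨by positivity, (div_lt_one hp0).2 hp⟩, by field_simp⟩

section Legendre

variable {A B : ℝ}

lemma abs_deriv_mul_legendre_integrand_comp_div (hB : 0 < B) {s : ℝ} (hs : 0 < s) :
    |-(B / s ^ 2)| * (1 / √(((B / s) ^ 2 - A ^ 2) * ((B / s) ^ 2 - B ^ 2))) =
      1 / B * (1 / √((1 - s ^ 2) * (1 - (A / B) ^ 2 * s ^ 2))) := by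
  have harg : ((B / s) ^ 2 - A ^ 2) * ((B / s) ^ 2 - B ^ 2) =
      (B ^ 2 / s ^ 2) ^ 2 * ((1 - s ^ 2) * (1 - (A / B) ^ 2 * s ^ 2)) := by
    field_simp
  rw [harg, Real.sqrt_mul (sq_nonneg _), Real.sqrt_sq (by positivity), abs_neg,
    abs_of_pos (by positivity)]
  field_simp

lemma hasDerivAt_const_div {s : ℝ} (hs : s ≠ 0) :
    HasDerivAt (fun s : ℝ => B / s) (-(B / s ^ 2)) s := by
  simpa [div_eq_mul_inv] using (hasDerivAt_inv hs).const_mul B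

lemma injective_const_div (hB : B ≠ 0) : Function.Injective (fun s : ℝ => B / s) := by
  intro x y h
  simp only [div_eq_mul_inv] at h
  exact inv_inj.1 (mul_left_cancel₀ hB h)

lemma div_sq_lt_one_of_abs_lt (hAB : |A| < B) : (A / B) ^ 2 < 1 := by
  have hB : 0 < B := (abs_nonneg A).trans_lt hAB
  rw [sq_lt_one_iff_abs_lt_one, abs_div, abs_of_pos hB]
  exact (div_lt_one hB).2 hAB

lemma integrableOn_Ioi_legendre_integrand (hAB : |A| < B) :
    IntegrableOn (fun p : ℝ => 1 / √((p ^ 2 - A ^ 2) * (p ^ 2 - B ^ 2))) (Ioi B) := by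
  have hB : 0 < B := (abs_nonneg A).trans_lt hAB
  rw [← image_div_Ioo_zero_one hB, integrableOn_image_iff_integrableOn_abs_deriv_smul
    measurableSet_Ioo (fun s hs => (hasDerivAt_const_div hs.1.ne').hasDerivWithinAt)
    (injective_const_div hB.ne').injOn]
  exact IntegrableOn.congr_fun
    ((integrableOn_ellipticK_integrand (div_sq_lt_one_of_abs_lt hAB)).const_mul (1 / B))
    (fun s hs => (abs_deriv_mul_legendre_integrand_comp_div hB hs.1).symm) measurableSet_Ioo

lemma integral_Ioi_legendre_integrand (hAB : |A| < B) :
    ∫ p in Ioi B, 1 / √((p ^ 2 - A ^ 2) * (p ^ 2 - B ^ 2)) = 1 / B * ellipticK (A / B) := by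
  have hB : 0 < B := (abs_nonneg A).trans_lt hAB
  rw [← image_div_Ioo_zero_one hB, integral_image_eq_integral_abs_deriv_smul
    measurableSet_Ioo (fun s hs => (hasDerivAt_const_div hs.1.ne').hasDerivWithinAt)
    (injective_const_div hB.ne').injOn, ellipticK_eq_integral_Ioo, ← integral_const_mul]
  exact setIntegral_congr_fun measurableSet_Ioo fun s hs =>
    abs_deriv_mul_legendre_integrand_comp_div hB hs.1

end Legendre

noncomputable def reciprocalQuartic (a b x : ℝ) : ℝ :=
  (x ^ 2 - a ^ 2) * (x ^ 2 - 1 / a ^ 2) * (x ^ 2 - b ^ 2) * (x ^ 2 - 1 / b ^ 2)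

section Joukowski

variable {ε : ℝ}

lemma strictMonoOn_add_div (hε : ε ≤ 1) : StrictMonoOn (fun x : ℝ => x + ε / x) (Ici 1) := by
  intro x hx y hy hxy
  simp only [mem_Ici] at hx hy
  have hx0 : 0 < x := by linarith
  have hxy1 : 1 < x * y := by nlinarith
  have hdiff : y + ε / y - (x + ε / x) = (y - x) * (x * y - ε) / (x * y) := by
    field_simp
    ring
  have hpos : 0 < (y - x) * (x * y - ε) / (x * y) :=
    div_pos (mul_pos (by linarith) (by linarith)) (by positivity)
  change x + ε / x < y + ε / y
  linarith

lemma image_add_div_Ioi (hε : ε ≤ 1) {c : ℝ} (hc : 1 ≤ c) :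
    (fun x : ℝ => x + ε / x) '' Ioi c = Ioi (c + ε / c) := by
  refine Subset.antisymm ?_ (intermediate_value_Ioi (f := fun x : ℝ => x + ε / x) ?_ ?_)
  · rintro _ ⟨x, hx, rfl⟩
    exact strictMonoOn_add_div hε hc (hc.trans (le_of_lt hx)) hx
  · exact continuousOn_id.add (continuousOn_const.div continuousOn_id fun x hx =>
      (zero_lt_one.trans_le (hc.trans hx)).ne')
  · exact tendsto_id.atTop_add (tendsto_const_nhds.div_atTop tendsto_id)

lemma hasDerivAt_add_div {x : ℝ} (hx : x ≠ 0) :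
    HasDerivAt (fun x : ℝ => x + ε / x) (1 - ε / x ^ 2) x := by
  rw [show 1 - ε / x ^ 2 = 1 + ε * -(x ^ 2)⁻¹ by ring]
  exact (hasDerivAt_id' x).add ((hasDerivAt_inv hx).const_mul ε)

lemma sq_sub_sq_mul_sq_sub_inv_sq (hε : ε ^ 2 = 1) {x a : ℝ} (hx : x ≠ 0) (ha : a ≠ 0) :
    (x ^ 2 - a ^ 2) * (x ^ 2 - 1 / a ^ 2) = x ^ 2 * ((x + ε / x) ^ 2 - (a + ε / a) ^ 2) := by
  field_simp
  linear_combination (x ^ 2 - a ^ 2) * hε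

lemma abs_deriv_mul_legendre_integrand_comp_add_div (hε : ε ^ 2 = 1) {a b x : ℝ} (ha : a ≠ 0)
    (hb : b ≠ 0) (hx : 1 < x) :
    |1 - ε / x ^ 2| *
        (1 / √(((x + ε / x) ^ 2 - (a + ε / a) ^ 2) * ((x + ε / x) ^ 2 - (b + ε / b) ^ 2))) =
      (x ^ 2 - ε) / √(reciprocalQuartic a b x) := by
  have hx0 : x ≠ 0 := (zero_lt_one.trans hx).ne'
  have hquartic : reciprocalQuartic a b x = (x ^ 2) ^ 2 *
      (((x + ε / x) ^ 2 - (a + ε / a) ^ 2) * ((x + ε / x) ^ 2 - (b + ε / b) ^ 2)) := by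
    rw [reciprocalQuartic, sq_sub_sq_mul_sq_sub_inv_sq hε hx0 ha, mul_assoc,
      sq_sub_sq_mul_sq_sub_inv_sq hε hx0 hb]
    ring
  have hderiv : 0 < 1 - ε / x ^ 2 := by
    rw [sub_pos, div_lt_one (by positivity)]
    nlinarith [show ε ≤ 1 by nlinarith]
  rw [hquartic, Real.sqrt_mul (sq_nonneg _), Real.sqrt_sq (sq_nonneg _), abs_of_pos hderiv]
  field_simp

lemma abs_add_div_lt_add_div (hε : ε ^ 2 = 1) {a b : ℝ} (ha : 1 < a) (hab : a < b) :
    |a + ε / a| < b + ε / b := by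
  have hε1 : ε ≤ 1 := by nlinarith
  have hmono := strictMonoOn_add_div hε1 ha.le (ha.le.trans hab.le) hab
  have hpos : 0 < a + ε / a := by
    rw [show a + ε / a = (a ^ 2 + ε) / a by field_simp]
    exact div_pos (by nlinarith [show -1 ≤ ε by nlinarith]) (by linarith)
  rwa [abs_of_pos hpos]

lemma integrableOn_Ioi_sub_div_sqrt_reciprocalQuartic (hε : ε ^ 2 = 1) {a b : ℝ} (ha : 1 < a)
    (hab : a < b) :
    IntegrableOn (fun x => (x ^ 2 - ε) / √(reciprocalQuartic a b x)) (Ioi b) := by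
  have hb : 1 < b := ha.trans hab
  have hε1 : ε ≤ 1 := by nlinarith
  have h := integrableOn_Ioi_legendre_integrand (abs_add_div_lt_add_div hε ha hab)
  rw [← image_add_div_Ioi hε1 hb.le, integrableOn_image_iff_integrableOn_abs_deriv_smul
    measurableSet_Ioi
    (fun x hx => (hasDerivAt_add_div (zero_lt_one.trans (hb.trans hx)).ne').hasDerivWithinAt)
    ((strictMonoOn_add_div hε1).mono (Ioi_subset_Ici hb.le)).injOn] at h
  exact h.congr_fun (fun x hx => abs_deriv_mul_legendre_integrand_comp_add_div hε
    (by linarith) (by linarith) (hb.trans hx)) measurableSet_Ioi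

lemma integral_Ioi_sub_div_sqrt_reciprocalQuartic (hε : ε ^ 2 = 1) {a b : ℝ} (ha : 1 < a)
    (hab : a < b) :
    ∫ x in Ioi b, (x ^ 2 - ε) / √(reciprocalQuartic a b x) =
      1 / (b + ε / b) * ellipticK ((a + ε / a) / (b + ε / b)) := by
  have hb : 1 < b := ha.trans hab
  have hε1 : ε ≤ 1 := by nlinarith
  rw [← integral_Ioi_legendre_integrand (abs_add_div_lt_add_div hε ha hab),
    ← image_add_div_Ioi hε1 hb.le, integral_image_eq_integral_abs_deriv_smul
    measurableSet_Ioi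
    (fun x hx => (hasDerivAt_add_div (zero_lt_one.trans (hb.trans hx)).ne').hasDerivWithinAt)
    ((strictMonoOn_add_div hε1).mono (Ioi_subset_Ici hb.le)).injOn]
  exact setIntegral_congr_fun measurableSet_Ioi fun x hx =>
    (abs_deriv_mul_legendre_integrand_comp_add_div hε (by linarith) (by linarith)
      (hb.trans hx)).symm

end Joukowski

theorem stmt_5 (a b : ℝ) (ha : 1 < a) (hab : a < b) :
    (∫ x in Set.Ioi b,
        1 / Real.sqrt ((x^2 - a^2) * (x^2 - 1/a^2) * (x^2 - b^2) * (x^2 - 1/b^2))) =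
      (1/2) * ((b / (b^2 - 1)) * ellipticK (b * (a^2 - 1) / (a * (b^2 - 1))) -
        (b / (b^2 + 1)) * ellipticK (b * (a^2 + 1) / (a * (b^2 + 1)))) := by
  have hneg : (-1 : ℝ) ^ 2 = 1 := by norm_num
  have hpos : (1 : ℝ) ^ 2 = 1 := by norm_num
  have hsplit : ∀ x, 1 / √(reciprocalQuartic a b x) =
      1 / 2 * ((x ^ 2 - -1) / √(reciprocalQuartic a b x) -
        (x ^ 2 - 1) / √(reciprocalQuartic a b x)) :=
    fun x => by ring
  change ∫ x in Ioi b, 1 / √(reciprocalQuartic a b x) = _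
  simp_rw [hsplit]
  rw [integral_const_mul,
    integral_sub (integrableOn_Ioi_sub_div_sqrt_reciprocalQuartic hneg ha hab)
      (integrableOn_Ioi_sub_div_sqrt_reciprocalQuartic hpos ha hab),
    integral_Ioi_sub_div_sqrt_reciprocalQuartic hneg ha hab,
    integral_Ioi_sub_div_sqrt_reciprocalQuartic hpos ha hab]
  have ha0 : a ≠ 0 := by linarith
  have hb0 : b ≠ 0 := by linarith
  have hb2 : b ^ 2 - 1 ≠ 0 := by nlinarith
  simp only [neg_div, ← sub_eq_add_neg]
  rw [show 1 / (b - 1 / b) = b / (b ^ 2 - 1) by field_simp,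
    show (a - 1 / a) / (b - 1 / b) = b * (a ^ 2 - 1) / (a * (b ^ 2 - 1)) by field_simp,
    show 1 / (b + 1 / b) = b / (b ^ 2 + 1) by field_simp,
    show (a + 1 / a) / (b + 1 / b) = b * (a ^ 2 + 1) / (a * (b ^ 2 + 1)) by field_simp]
end

section
/- Let a, b be real numbers with 1 < a < b. Then π = ( 2√((b²−a²)(a²b²−1)) / (a(b²−1)) ) · K( b(a²−1)/(a(b²−1)) ) / F_D^(3)(1/2; −1/2, 1/2, 1/2; 1 | 1−a⁴, (a⁴−1)b²/(a²−b²), (a⁴−1)/(a²b²−1) ). -/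
open MeasureTheory Real

/-!
Substituting `u = (w² - 1)/(a⁴ - 1)` turns the Euler integral of `F_D` into
`2 √((b² - a²)(a²b² - 1)) ∫₁^{a²} w² dw / √P(w)`, where `P = octic a b` is
`P(w) = (w² - 1)(a⁴ - w²)(b²w² - a²)(a²b² - w²)`.
Since `P(a²/w) = a⁸ P(w) / w⁸`, the involution `w ↦ a²/w` exchanges `w² dw/√P` and `a² dw/√P`, so
`w²` may be replaced by `(w² + a²)/2`. Then `t = (w - a²/w)/(a² - 1)`, with
`dt = (w² + a²) dw / ((a² - 1) w²)`, factors `(1 - t²)(1 - k²t²)` as `P(w)` over a square and turns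
`(w² + a²) dw/√P` into `dt / (a (b² - 1) √((1 - t²)(1 - k²t²)))` on `(-1, 1)`, where
`k = b (a² - 1)/(a (b² - 1))`; its integral is `2 K(k) / (a (b² - 1))`. Finally `Γ(1/2)² = π`.
-/

open Set intervalIntegral

theorem integral_neg_self_eq_two_mul_of_even {f : ℝ → ℝ} {c : ℝ} (heven : ∀ x, f (-x) = f x)
    (hf : IntervalIntegrable f volume 0 c) : ∫ x in -c..c, f x = 2 * ∫ x in 0..c, f x := by
  have hneg : IntervalIntegrable f volume (-c) 0 := by
    simpa [heven] using (IntervalIntegrable.iff_comp_neg (f := f)).1 hf.symm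
  have hrefl : ∫ x in -c..0, f x = ∫ x in 0..c, f x := by
    simpa [heven] using (integral_comp_neg (a := 0) (b := c) f).symm
  rw [← integral_add_adjacent_intervals hneg hf, hrefl, two_mul]

noncomputable def ellipticKIntegrand (k t : ℝ) : ℝ :=
  1 / √((1 - t ^ 2) * (1 - k ^ 2 * t ^ 2))

section EllipticK

variable {k : ℝ}

theorem ellipticKIntegrand_neg (k t : ℝ) :
    ellipticKIntegrand k (-t) = ellipticKIntegrand k t := by
  simp only [ellipticKIntegrand, neg_sq]

theorem ellipticKIntegrand_pos (hk : k ^ 2 < 1) {t : ℝ} (ht : t ∈ Ioo (-1) 1) :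
    0 < ellipticKIntegrand k t := by
  have ht2 : t ^ 2 < 1 := by nlinarith [ht.1, ht.2]
  have hkt : 0 < 1 - k ^ 2 * t ^ 2 := by nlinarith [sq_nonneg k, sq_nonneg t]
  unfold ellipticKIntegrand
  exact one_div_pos.2 (Real.sqrt_pos.2 (mul_pos (by linarith) hkt))

theorem ellipticKIntegrand_le (hk : k ^ 2 < 1) {t : ℝ} (ht : t ∈ Ioo (-1) 1) :
    ellipticKIntegrand k t ≤ (√(1 - k ^ 2))⁻¹ * (√(1 - t ^ 2))⁻¹ := by
  have ht2 : t ^ 2 < 1 := by nlinarith [ht.1, ht.2]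
  have hkt : 1 - k ^ 2 ≤ 1 - k ^ 2 * t ^ 2 := by nlinarith [sq_nonneg k]
  rw [ellipticKIntegrand, one_div, ← mul_inv, ← Real.sqrt_mul (by linarith), mul_comm]
  gcongr

theorem intervalIntegrable_ellipticKIntegrand (hk : k ^ 2 < 1) :
    IntervalIntegrable (ellipticKIntegrand k) volume (-1) 1 := by
  refine ((Polynomial.Chebyshev.intervalIntegrable_sqrt_one_sub_sq_inv).const_mul
    (√(1 - k ^ 2))⁻¹).mono_fun
      (Measurable.aestronglyMeasurable (by unfold ellipticKIntegrand; fun_prop)) ?_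
  rw [uIoc_of_le (by norm_num), Filter.EventuallyLE, ← restrict_Ioo_eq_restrict_Ioc]
  filter_upwards [ae_restrict_mem measurableSet_Ioo] with t ht
  rw [Real.norm_of_nonneg (ellipticKIntegrand_pos hk ht).le, Real.norm_of_nonneg (by positivity),
    Real.sqrt_inv]
  exact ellipticKIntegrand_le hk ht

theorem intervalIntegrable_ellipticKIntegrand_zero_one (hk : k ^ 2 < 1) :
    IntervalIntegrable (ellipticKIntegrand k) volume 0 1 :=
  (intervalIntegrable_ellipticKIntegrand hk).mono_set (by simp [uIcc_of_le, Icc_subset_Icc])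

theorem integral_ellipticKIntegrand_neg_one_one (hk : k ^ 2 < 1) :
    ∫ t in (-1:ℝ)..1, ellipticKIntegrand k t = 2 * ellipticK k :=
  integral_neg_self_eq_two_mul_of_even (ellipticKIntegrand_neg k)
    (intervalIntegrable_ellipticKIntegrand_zero_one hk)

theorem ellipticK_pos (hk : k ^ 2 < 1) : 0 < ellipticK k :=
  intervalIntegral_pos_of_pos_on (intervalIntegrable_ellipticKIntegrand_zero_one hk)
    (fun t ht => ellipticKIntegrand_pos hk ⟨by linarith [ht.1], ht.2⟩) one_pos

end EllipticK

noncomputable def lauricellaHalfIntegrand (x₁ x₂ x₃ u : ℝ) : ℝ :=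
  √((1 - x₁ * u) / (u * (1 - u) * (1 - x₂ * u) * (1 - x₃ * u)))

theorem FD3_half_eq (x₁ x₂ x₃ : ℝ) (h₁ : x₁ ≤ 1) (h₂ : x₂ ≤ 1) (h₃ : x₃ ≤ 1) :
    FD3 (1/2) (-(1/2)) (1/2) (1/2) 1 x₁ x₂ x₃
      = π⁻¹ * ∫ u in (0:ℝ)..1, lauricellaHalfIntegrand x₁ x₂ x₃ u := by
  have hΓ : Real.Gamma 1 / (Real.Gamma (1/2) * Real.Gamma (1 - 1/2)) = π⁻¹ := by
    rw [show (1:ℝ) - 1/2 = 1/2 by norm_num, Real.Gamma_one, Real.Gamma_one_half_eq,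
      Real.mul_self_sqrt pi_pos.le, one_div]
  rw [FD3, hΓ]
  congr 1
  refine integral_congr_Ioo_of_le zero_le_one fun u ⟨hu0, hu1⟩ => ?_
  have hpos : ∀ x ≤ (1:ℝ), 0 < 1 - x * u := fun x hx => by nlinarith
  have hu1' : 0 < 1 - u := sub_pos.2 hu1
  have e₁ : (1/2 : ℝ) - 1 = -(1/2) := by norm_num
  have e₂ : (1 : ℝ) - 1/2 - 1 = -(1/2) := by norm_num
  have p₁ := hpos _ h₁
  have p₂ := hpos _ h₂
  have p₃ := hpos _ h₃
  simp only [e₁, e₂, neg_neg, Real.rpow_neg p₂.le, Real.rpow_neg p₃.le, Real.rpow_neg hu0.le,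
    Real.rpow_neg hu1'.le]
  rw [lauricellaHalfIntegrand, Real.sqrt_eq_rpow, Real.div_rpow p₁.le (by positivity),
    Real.mul_rpow (by positivity) p₃.le, Real.mul_rpow (by positivity) p₂.le,
    Real.mul_rpow hu0.le hu1'.le]
  field_simp

def octic (a b w : ℝ) : ℝ :=
  (w ^ 2 - 1) * (a ^ 4 - w ^ 2) * (b ^ 2 * w ^ 2 - a ^ 2) * (a ^ 2 * b ^ 2 - w ^ 2)

section Octic

variable {a b : ℝ}

theorem octic_factors_pos (ha : 1 < a) (hab : a < b) {w : ℝ} (hw : w ∈ Ioo 1 (a ^ 2)) :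
    0 < w ^ 2 - 1 ∧ 0 < a ^ 4 - w ^ 2 ∧ 0 < b ^ 2 * w ^ 2 - a ^ 2 ∧ 0 < a ^ 2 * b ^ 2 - w ^ 2 := by
  obtain ⟨hw1, hwa⟩ := hw
  have hbw : a < b * w := by nlinarith
  have hwab : w < a * b := by nlinarith
  exact ⟨by nlinarith, by nlinarith, by nlinarith, by nlinarith⟩

theorem octic_pos (ha : 1 < a) (hab : a < b) {w : ℝ} (hw : w ∈ Ioo 1 (a ^ 2)) :
    0 < octic a b w := by
  obtain ⟨h₁, h₂, h₃, h₄⟩ := octic_factors_pos ha hab hw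
  unfold octic
  positivity

theorem octic_div (a b : ℝ) {w : ℝ} (hw : w ≠ 0) :
    octic a b (a ^ 2 / w) = (a ^ 4 / w ^ 4) ^ 2 * octic a b w := by
  unfold octic
  field_simp

end Octic

section Substitutions

variable {a b : ℝ}

theorem lauricellaHalfIntegrand_mul_deriv (ha : 1 < a) (hab : a < b) {w : ℝ}
    (hw : w ∈ Ioo 1 (a ^ 2)) :
    lauricellaHalfIntegrand (1 - a ^ 4) ((a ^ 4 - 1) * b ^ 2 / (a ^ 2 - b ^ 2))
        ((a ^ 4 - 1) / (a ^ 2 * b ^ 2 - 1)) ((w ^ 2 - 1) / (a ^ 4 - 1)) * (2 * w / (a ^ 4 - 1))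
      = 2 * √((b ^ 2 - a ^ 2) * (a ^ 2 * b ^ 2 - 1)) * (w ^ 2 / √(octic a b w)) := by
  obtain ⟨h₁, h₂, h₃, h₄⟩ := octic_factors_pos ha hab hw
  have hw0 : 0 < w := by linarith [hw.1]
  have hA : 0 < a ^ 4 - 1 := by nlinarith
  have hba : 0 < b ^ 2 - a ^ 2 := by nlinarith
  have hab1 : 0 < a ^ 2 * b ^ 2 - 1 := by nlinarith
  have hab' : a ^ 2 - b ^ 2 ≠ 0 := by linarith
  have e₁ : 1 - (1 - a ^ 4) * ((w ^ 2 - 1) / (a ^ 4 - 1)) = w ^ 2 := by field_simp; ring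
  have e₂ : 1 - (w ^ 2 - 1) / (a ^ 4 - 1) = (a ^ 4 - w ^ 2) / (a ^ 4 - 1) := by field_simp; ring
  have e₃ : 1 - (a ^ 4 - 1) * b ^ 2 / (a ^ 2 - b ^ 2) * ((w ^ 2 - 1) / (a ^ 4 - 1))
      = (b ^ 2 * w ^ 2 - a ^ 2) / (b ^ 2 - a ^ 2) := by field_simp; ring
  have e₄ : 1 - (a ^ 4 - 1) / (a ^ 2 * b ^ 2 - 1) * ((w ^ 2 - 1) / (a ^ 4 - 1))
      = (a ^ 2 * b ^ 2 - w ^ 2) / (a ^ 2 * b ^ 2 - 1) := by field_simp; ring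
  have hratio : w ^ 2 / ((w ^ 2 - 1) / (a ^ 4 - 1) * ((a ^ 4 - w ^ 2) / (a ^ 4 - 1)) *
      ((b ^ 2 * w ^ 2 - a ^ 2) / (b ^ 2 - a ^ 2)) * ((a ^ 2 * b ^ 2 - w ^ 2) / (a ^ 2 * b ^ 2 - 1)))
      = (w * (a ^ 4 - 1) * √((b ^ 2 - a ^ 2) * (a ^ 2 * b ^ 2 - 1))) ^ 2 / octic a b w := by
    rw [mul_pow, Real.sq_sqrt (mul_pos hba hab1).le]
    unfold octic
    field_simp
  rw [lauricellaHalfIntegrand, e₁, e₂, e₃, e₄, hratio, Real.sqrt_div' _ (octic_pos ha hab hw).le,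
    Real.sqrt_sq (by positivity)]
  field_simp

theorem integral_lauricellaHalfIntegrand (ha : 1 < a) (hab : a < b) :
    ∫ u in (0:ℝ)..1, lauricellaHalfIntegrand (1 - a ^ 4) ((a ^ 4 - 1) * b ^ 2 / (a ^ 2 - b ^ 2))
        ((a ^ 4 - 1) / (a ^ 2 * b ^ 2 - 1)) u
      = 2 * √((b ^ 2 - a ^ 2) * (a ^ 2 * b ^ 2 - 1)) *
          ∫ w in (1:ℝ)..a ^ 2, w ^ 2 / √(octic a b w) := by
  have ha2 : 1 < a ^ 2 := by nlinarith
  have hA : 0 < a ^ 4 - 1 := by nlinarith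
  have hsub := integral_comp_mul_deriv_of_deriv_nonneg (a := 1) (b := a ^ 2)
    (f := fun w => (w ^ 2 - 1) / (a ^ 4 - 1)) (f' := fun w => 2 * w / (a ^ 4 - 1))
    (g := lauricellaHalfIntegrand (1 - a ^ 4) ((a ^ 4 - 1) * b ^ 2 / (a ^ 2 - b ^ 2))
      ((a ^ 4 - 1) / (a ^ 2 * b ^ 2 - 1)))
    (by fun_prop)
    (fun w _ => by simpa using ((hasDerivAt_pow 2 w).sub_const 1).div_const (a ^ 4 - 1))
    (fun w hw => by
      rw [min_eq_left ha2.le, max_eq_right ha2.le] at hw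
      exact div_nonneg (by linarith [hw.1]) hA.le)
  rw [one_pow, sub_self, zero_div, ← pow_mul, div_self hA.ne'] at hsub
  rw [← hsub, ← intervalIntegral.integral_const_mul]
  exact integral_congr_Ioo_of_le ha2.le fun w hw => lauricellaHalfIntegrand_mul_deriv ha hab hw

theorem integral_sq_div_sqrt_octic_reflect (ha : a ≠ 0) :
    ∫ w in (1:ℝ)..a ^ 2, w ^ 2 / √(octic a b w)
      = ∫ w in (1:ℝ)..a ^ 2, a ^ 2 / √(octic a b w) := by
  have hmin : 0 < min 1 (a ^ 2) := lt_min one_pos (by positivity)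
  have hsub := integral_comp_mul_deriv_of_deriv_nonpos (a := 1) (b := a ^ 2)
    (f := fun w => a ^ 2 / w) (f' := fun w => -(a ^ 2 / w ^ 2))
    (g := fun v => v ^ 2 / √(octic a b v))
    (continuousOn_const.div continuousOn_id fun w hw => (hmin.trans_le hw.1).ne')
    (fun w hw => by
      have hw0 : w ≠ 0 := (hmin.trans hw.1).ne'
      simpa [div_eq_mul_inv, hw0] using (hasDerivAt_inv hw0).const_mul (a ^ 2))
    (fun w _ => by simp only [Left.neg_nonpos_iff]; positivity)
  rw [div_one, div_self (by positivity)] at hsub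
  rw [← neg_neg (∫ w in (1:ℝ)..a ^ 2, w ^ 2 / √(octic a b w)), ← integral_symm, ← hsub,
    ← intervalIntegral.integral_neg]
  refine integral_congr_uIoo fun w hw => ?_
  have hw0 : w ≠ 0 := (hmin.trans hw.1).ne'
  simp only [Function.comp_apply]
  rw [octic_div a b hw0, Real.sqrt_mul (by positivity), Real.sqrt_sq (by positivity)]
  field_simp

theorem hasDerivAt_sub_sq_div_div (a : ℝ) {w : ℝ} (hw : w ≠ 0) :
    HasDerivAt (fun w => (w - a ^ 2 / w) / (a ^ 2 - 1)) ((1 + a ^ 2 / w ^ 2) / (a ^ 2 - 1)) w := by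
  refine (((hasDerivAt_id' w).sub ((hasDerivAt_const w (a ^ 2)).div (hasDerivAt_id' w) hw))
    |>.div_const (a ^ 2 - 1)).congr_deriv ?_
  field_simp
  ring

theorem ellipticKIntegrand_sub_sq_div_mul_deriv (ha : 1 < a) (hab : a < b) {w : ℝ}
    (hw : w ∈ Ioo 1 (a ^ 2)) :
    ellipticKIntegrand (b * (a ^ 2 - 1) / (a * (b ^ 2 - 1))) ((w - a ^ 2 / w) / (a ^ 2 - 1)) *
        ((1 + a ^ 2 / w ^ 2) / (a ^ 2 - 1))
      = a * (b ^ 2 - 1) * ((w ^ 2 + a ^ 2) / √(octic a b w)) := by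
  have hw0 : 0 < w := by linarith [hw.1]
  have ha1 : 0 < a ^ 2 - 1 := by nlinarith
  have hb1 : 0 < b ^ 2 - 1 := by nlinarith
  have ha0 : 0 < a := by linarith
  have key : (1 - ((w - a ^ 2 / w) / (a ^ 2 - 1)) ^ 2) *
      (1 - (b * (a ^ 2 - 1) / (a * (b ^ 2 - 1))) ^ 2 * ((w - a ^ 2 / w) / (a ^ 2 - 1)) ^ 2)
      = octic a b w / ((a ^ 2 - 1) * a * (b ^ 2 - 1) * w ^ 2) ^ 2 := by
    unfold octic
    field_simp
    ring
  rw [ellipticKIntegrand, key, Real.sqrt_div (octic_pos ha hab hw).le,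
    Real.sqrt_sq (by positivity)]
  field_simp

theorem integral_ellipticKIntegrand_eq (ha : 1 < a) (hab : a < b) :
    ∫ t in (-1:ℝ)..1, ellipticKIntegrand (b * (a ^ 2 - 1) / (a * (b ^ 2 - 1))) t
      = a * (b ^ 2 - 1) * ∫ w in (1:ℝ)..a ^ 2, (w ^ 2 + a ^ 2) / √(octic a b w) := by
  have ha2 : 1 < a ^ 2 := by nlinarith
  have hmin : 0 < min 1 (a ^ 2) := lt_min one_pos (by positivity)
  have hsub := integral_comp_mul_deriv_of_deriv_nonneg (a := 1) (b := a ^ 2)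
    (g := ellipticKIntegrand (b * (a ^ 2 - 1) / (a * (b ^ 2 - 1))))
    (fun w hw =>
      (hasDerivAt_sub_sq_div_div a (hmin.trans_le hw.1).ne').continuousAt.continuousWithinAt)
    (fun w hw => hasDerivAt_sub_sq_div_div a (hmin.trans hw.1).ne')
    (fun w _ => div_nonneg (by positivity) (by linarith))
  have h₁ : ((1:ℝ) - a ^ 2 / 1) / (a ^ 2 - 1) = -1 := by
    rw [div_one, ← neg_sub, neg_div, div_self (by linarith)]
  have h₂ : (a ^ 2 - a ^ 2 / a ^ 2) / (a ^ 2 - 1) = 1 := by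
    rw [div_self (by positivity), div_self (by linarith)]
  rw [h₁, h₂] at hsub
  rw [← hsub, ← intervalIntegral.integral_const_mul]
  exact integral_congr_Ioo_of_le ha2.le fun w hw =>
    ellipticKIntegrand_sub_sq_div_mul_deriv ha hab hw

theorem modulus_sq_lt_one (ha : 1 < a) (hab : a < b) :
    (b * (a ^ 2 - 1) / (a * (b ^ 2 - 1))) ^ 2 < 1 := by
  have hlt : b * (a ^ 2 - 1) < a * (b ^ 2 - 1) := by
    nlinarith [mul_pos (sub_pos.2 hab) (show 0 < a * b + 1 by nlinarith)]
  have hpos : 0 < b * (a ^ 2 - 1) := mul_pos (by linarith) (by nlinarith)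
  rw [div_pow, div_lt_one (by nlinarith)]
  nlinarith

theorem integral_sq_div_sqrt_octic (ha : 1 < a) (hab : a < b) :
    ∫ w in (1:ℝ)..a ^ 2, w ^ 2 / √(octic a b w)
      = ellipticK (b * (a ^ 2 - 1) / (a * (b ^ 2 - 1))) / (a * (b ^ 2 - 1)) := by
  have hb1 : 0 < b ^ 2 - 1 := by nlinarith
  have hK := ellipticK_pos (modulus_sq_lt_one ha hab)
  have hsum : ∫ w in (1:ℝ)..a ^ 2, (w ^ 2 + a ^ 2) / √(octic a b w)
      = 2 * ellipticK (b * (a ^ 2 - 1) / (a * (b ^ 2 - 1))) / (a * (b ^ 2 - 1)) := by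
    rw [← integral_ellipticKIntegrand_neg_one_one (modulus_sq_lt_one ha hab),
      integral_ellipticKIntegrand_eq ha hab]
    field_simp
  -- a nonzero interval integral forces integrability
  have hint : IntervalIntegrable (fun w => (w ^ 2 + a ^ 2) / √(octic a b w)) volume 1 (a ^ 2) :=
    intervalIntegrable_of_integral_ne_zero (by rw [hsum]; positivity)
  have hweight : ∀ c : ℝ → ℝ, Continuous c →
      IntervalIntegrable (fun w => c w / √(octic a b w)) volume 1 (a ^ 2) := fun c hc => by
    have hden : ∀ w : ℝ, w ^ 2 + a ^ 2 ≠ 0 := fun w => by positivity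
    convert hint.continuousOn_mul (hc.div (by fun_prop) hden).continuousOn using 1
    funext w
    exact (div_mul_div_cancel₀ (hden w)).symm
  have hadd : ∫ w in (1:ℝ)..a ^ 2, (w ^ 2 + a ^ 2) / √(octic a b w)
      = (∫ w in (1:ℝ)..a ^ 2, w ^ 2 / √(octic a b w))
        + ∫ w in (1:ℝ)..a ^ 2, a ^ 2 / √(octic a b w) := by
    simp only [add_div]
    exact integral_add (hweight _ (by fun_prop)) (hweight _ (by fun_prop))
  rw [← integral_sq_div_sqrt_octic_reflect (by linarith), hsum, mul_div_assoc] at hadd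
  linarith

end Substitutions

theorem stmt_12 (a b : ℝ) (ha : 1 < a) (hab : a < b) :
    π = (2 * Real.sqrt ((b^2 - a^2) * (a^2*b^2 - 1)) / (a * (b^2 - 1))) *
          ellipticK (b * (a^2 - 1) / (a * (b^2 - 1))) /
        FD3 (1/2) (-(1/2)) (1/2) (1/2) 1
          (1 - a^4) ((a^4 - 1) * b^2 / (a^2 - b^2)) ((a^4 - 1) / (a^2*b^2 - 1)) := by
  have ha2 : 1 < a ^ 2 := by nlinarith
  have hab2 : a ^ 2 < b ^ 2 := by nlinarith
  have hx₂ : (a ^ 4 - 1) * b ^ 2 / (a ^ 2 - b ^ 2) ≤ 1 :=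
    (div_nonpos_of_nonneg_of_nonpos (mul_nonneg (by nlinarith) (sq_nonneg b)) (by linarith)).trans
      zero_le_one
  have hx₃ : (a ^ 4 - 1) / (a ^ 2 * b ^ 2 - 1) ≤ 1 :=
    div_le_one_of_le₀ (by nlinarith [mul_lt_mul_of_pos_left hab2 (by linarith : 0 < a ^ 2)])
      (by nlinarith)
  rw [FD3_half_eq _ _ _ (by nlinarith) hx₂ hx₃, integral_lauricellaHalfIntegrand ha hab,
    integral_sq_div_sqrt_octic ha hab]
  have hK := ellipticK_pos (modulus_sq_lt_one ha hab)
  have hD : 0 < √((b ^ 2 - a ^ 2) * (a ^ 2 * b ^ 2 - 1)) :=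
    Real.sqrt_pos.2 (mul_pos (by linarith) (by nlinarith))
  generalize √((b ^ 2 - a ^ 2) * (a ^ 2 * b ^ 2 - 1)) = S at hD ⊢
  have hb1 : 0 < b ^ 2 - 1 := by linarith
  field_simp
end
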